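/- arXiv:1701.05126 — 3 statements merged into one kernel-verified Lean document; each statement's English description precedes it below -/
import Mathlib

section
/- For complex $q$ with $0<|q|<1$, the Cesàro sum of the divergent series $\widetilde{F}(q)=\sum_{n\geq 0}(-1)^n(q;q)_n$ exists and equals $\frac{1}{2}\sigma(q)$, i.e., the arithmetic means $\frac{1}{N}\sum_{k=0}^{N-1} S_k$ of its partial sums $S_k = \sum_{n=0}^{k}(-1)^n(q;q)_n$ converge to $\frac{1}{2}\sigma(q)$ as $N\to\infty$. -/
open Filter Topology

/-- The q-Pochhammer symbol `(q;q)_n = ∏_{j=1}^n (1 - q^j)`. -/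
noncomputable def qPoch (q : ℂ) (n : ℕ) : ℂ := ∏ j ∈ Finset.range n, (1 - q ^ (j + 1))

/-!
Write `a n = (-1)^n (q;q)_n`. Since `(q;q)_{n+1} = (q;q)_n (1 - q^{n+1})`, the sum `a n + a (n+1)`
is the `n`-th term `(-1)^n q^{n+1} (q;q)_n` of the series defining `σ(q) - 1`; hence twice a partial
sum of `∑ a n` is `1 + (partial sum of σ(q) - 1) - a N`. The factors `1 - q^j` form a convergent
infinite product, so `a` is bounded: the partial sums of `∑ a n` are half of a sequence tending to
`σ(q)`, minus a term `a N / 2` whose own partial sums stay bounded and therefore vanish on Cesàro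
averaging.
-/

open Finset

theorem sum_range_add_succ {M : Type*} [AddCommGroup M] (a : ℕ → M) (N : ℕ) :
    ∑ n ∈ range N, (a n + a (n + 1)) = 2 • ∑ n ∈ range N, a n + a N - a 0 := by
  induction N with
  | zero => simp
  | succ N ih => rw [sum_range_succ, sum_range_succ, ih]; abel

section Cesaro

variable {E : Type*} [NormedAddCommGroup E] [NormedSpace ℝ E]

theorem tendsto_inv_smul_of_norm_le {s : ℕ → E} {C : ℝ} (hs : ∀ N, ‖s N‖ ≤ C) :
    Tendsto (fun N : ℕ => (N⁻¹ : ℝ) • s N) atTop (𝓝 0) :=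
  (tendsto_inv_atTop_zero.comp tendsto_natCast_atTop_atTop).zero_smul_isBoundedUnder_le
    (isBoundedUnder_of ⟨C, hs⟩)

theorem tendsto_cesaro_sum_range_of_hasSum_add_succ {a : ℕ → E} {T : E} {C : ℝ}
    (ha : ∀ n, ‖a n‖ ≤ C) (hT : HasSum (fun n => a n + a (n + 1)) T) :
    Tendsto (fun N : ℕ => (N⁻¹ : ℝ) • ∑ k ∈ range N, ∑ n ∈ range (k + 1), a n) atTop
      (𝓝 ((2⁻¹ : ℝ) • (a 0 + T))) := by
  set U : ℕ → E := fun N => ∑ n ∈ range N, (a n + a (n + 1))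
  have hP : ∀ N, ∑ n ∈ range N, a n = (2⁻¹ : ℝ) • (a 0 + U N - a N) := fun N => by
    simp only [U, sum_range_add_succ, two_nsmul]
    module
  obtain ⟨D, hD⟩ := isBounded_iff_forall_norm_le.1
    (Metric.isBounded_range_of_tendsto U hT.tendsto_sum_nat)
  have hPbound : ∀ N, ‖∑ n ∈ range N, a n‖ ≤ C + D + C := fun N => by
    have h := norm_sub_le_of_le (norm_add_le_of_le (ha 0) (hD _ ⟨N, rfl⟩)) (ha N)
    rw [hP, norm_smul, Real.norm_of_nonneg (by norm_num)]
    linarith [norm_nonneg (a 0 + U N - a N)]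
  have hmain : Tendsto (fun N : ℕ => (N⁻¹ : ℝ) • ∑ k ∈ range N, (2⁻¹ : ℝ) • (a 0 + U (k + 1)))
      atTop (𝓝 ((2⁻¹ : ℝ) • (a 0 + T))) :=
    (((hT.tendsto_sum_nat.comp (tendsto_add_atTop_nat 1)).const_add (a 0)).const_smul
      (2⁻¹ : ℝ)).cesaro_smul
  have hrem : Tendsto (fun N : ℕ => (N⁻¹ : ℝ) • ∑ k ∈ range N, a (k + 1)) atTop (𝓝 0) := by
    refine tendsto_inv_smul_of_norm_le (C := C + D + C + C) fun N => ?_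
    have hshift : ∑ k ∈ range N, a (k + 1) = ∑ n ∈ range (N + 1), a n - a 0 := by
      rw [sum_range_succ', add_sub_cancel_right]
    rw [hshift]
    exact norm_sub_le_of_le (hPbound _) (ha 0)
  have hlim := hmain.sub (hrem.const_smul (2⁻¹ : ℝ))
  rw [smul_zero, sub_zero] at hlim
  refine hlim.congr fun N => ?_
  simp only [hP, smul_sub, sum_sub_distrib, ← smul_sum]
  module

end Cesaro

theorem qPoch_succ (q : ℂ) (n : ℕ) : qPoch q (n + 1) = qPoch q n * (1 - q ^ (n + 1)) :=
  prod_range_succ _ _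

theorem neg_one_pow_mul_qPoch_add_succ (q : ℂ) (n : ℕ) :
    (-1) ^ n * qPoch q n + (-1) ^ (n + 1) * qPoch q (n + 1) =
      (-1) ^ n * q ^ (n + 1) * qPoch q n := by
  rw [qPoch_succ, pow_succ]
  ring

theorem exists_norm_qPoch_le {q : ℂ} (hq : ‖q‖ < 1) : ∃ C, ∀ n, ‖qPoch q n‖ ≤ C := by
  have hprod : Multipliable fun j : ℕ => 1 + -q ^ (j + 1) :=
    multipliable_one_add_of_summable <| by
      simpa [pow_succ] using (summable_geometric_of_lt_one (norm_nonneg q) hq).mul_right ‖q‖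
  obtain ⟨C, hC⟩ := isBounded_iff_forall_norm_le.1
    (Metric.isBounded_range_of_tendsto _ hprod.tendsto_prod_tprod_nat)
  exact ⟨C, fun n => hC _ ⟨n, by simp only [qPoch, sub_eq_add_neg]⟩⟩

theorem summable_neg_one_pow_mul_pow_succ_mul_qPoch {q : ℂ} (hq : ‖q‖ < 1) :
    Summable fun n : ℕ => (-1) ^ n * q ^ (n + 1) * qPoch q n := by
  obtain ⟨C, hC⟩ := exists_norm_qPoch_le hq
  refine .of_norm_bounded ((summable_geometric_of_lt_one (norm_nonneg q) hq).mul_left (‖q‖ * C))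
    fun n => ?_
  simp only [norm_mul, norm_pow, norm_neg, norm_one, one_pow, one_mul, pow_succ]
  calc ‖q‖ ^ n * ‖q‖ * ‖qPoch q n‖ ≤ ‖q‖ ^ n * ‖q‖ * C := by gcongr; exact hC n
    _ = ‖q‖ * C * ‖q‖ ^ n := by ring

theorem cesaro_strangeF_general (q : ℂ) (hq : ‖q‖ < 1) :
    Tendsto (fun N : ℕ =>
        (∑ k ∈ Finset.range N, ∑ n ∈ Finset.range (k + 1), (-1 : ℂ) ^ n * qPoch q n) / N)
      atTop
      (𝓝 ((1 + ∑' n : ℕ, (-1 : ℂ) ^ n * q ^ (n + 1) * qPoch q n) / 2)) := by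
  obtain ⟨C, hC⟩ := exists_norm_qPoch_le hq
  have ha : ∀ n, ‖(-1 : ℂ) ^ n * qPoch q n‖ ≤ C := by simpa using hC
  have hT : HasSum (fun n => (-1 : ℂ) ^ n * qPoch q n + (-1) ^ (n + 1) * qPoch q (n + 1))
      (∑' n : ℕ, (-1 : ℂ) ^ n * q ^ (n + 1) * qPoch q n) := by
    simpa only [neg_one_pow_mul_qPoch_add_succ] using
      (summable_neg_one_pow_mul_pow_succ_mul_qPoch hq).hasSum
  convert tendsto_cesaro_sum_range_of_hasSum_add_succ ha hT using 2 <;>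
    simp [qPoch, Complex.real_smul, div_eq_inv_mul, mul_add]

theorem cesaro_strangeF (q : ℂ) (hq0 : q ≠ 0) (hq : ‖q‖ < 1) :
    Tendsto (fun N : ℕ =>
        (∑ k ∈ Finset.range N, ∑ n ∈ Finset.range (k + 1), (-1 : ℂ) ^ n * qPoch q n) / N)
      atTop
      (𝓝 ((1 + ∑' n : ℕ, (-1 : ℂ) ^ n * q ^ (n + 1) * qPoch q n) / 2)) :=
  cesaro_strangeF_general q hq
end

section
/- For complex $q$ with $0<|q|<1$, Ramanujan's mock theta function $f(q) = 1 - \sum_{n=1}^\infty \frac{(-1)^n q^n}{(-q;q)_n}$ satisfies $f(q) - \frac{1}{(-q;q)_\infty} = 2\sum_{n=0}^\infty \frac{q^{2n+1}}{(-q;q)_{2n+1}}$. -/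
/-!
Since `(-q;q)_{n+1} = (-q;q)_n (1 + q^{n+1})`, the term `a_n = q^{n+1} / (-q;q)_{n+1}` equals
`1 / (-q;q)_n - 1 / (-q;q)_{n+1}`, so `∑ a_n` telescopes to `1 - 1 / (-q;q)_∞`. The series in `f`
is `∑ (-1)^{n+1} a_n`, and subtracting it from `∑ a_n` leaves twice the even-indexed terms
`a_{2k} = q^{2k+1} / (-q;q)_{2k+1}`.
-/

open Filter Topology

/-- The q-Pochhammer symbol `(-q;q)_n = ∏_{j=1}^n (1 + q^j)`. -/
noncomputable def negPoch (q : ℂ) (n : ℕ) : ℂ := ∏ j ∈ Finset.range n, (1 + q ^ (j + 1))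

theorem Summable.hasSum_sub_succ_of_tendsto {G : Type*} [AddCommGroup G] [TopologicalSpace G]
    [IsTopologicalAddGroup G] [T2Space G] {b : ℕ → G} {l : G}
    (hs : Summable fun n ↦ b n - b (n + 1)) (hb : Tendsto b atTop (𝓝 l)) :
    HasSum (fun n ↦ b n - b (n + 1)) (b 0 - l) := by
  have hpartial : Tendsto (fun n ↦ ∑ i ∈ Finset.range n, (b i - b (i + 1))) atTop
      (𝓝 (b 0 - l)) := by
    simpa only [Finset.sum_range_sub'] using tendsto_const_nhds.sub hb
  exact tendsto_nhds_unique hs.hasSum.tendsto_sum_nat hpartial ▸ hs.hasSum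

theorem tsum_sub_tsum_neg_one_pow_succ_mul {R : Type*} [Ring R] [UniformSpace R]
    [IsUniformAddGroup R] [CompleteSpace R] [T2Space R] {a : ℕ → R} (ha : Summable a) :
    ∑' n, a n - ∑' n, (-1) ^ (n + 1) * a n = 2 * ∑' k, a (2 * k) := by
  have he : Summable fun k ↦ a (2 * k) :=
    ha.comp_injective (mul_right_injective₀ two_ne_zero)
  have ho : Summable fun k ↦ a (2 * k + 1) :=
    ha.comp_injective ((add_left_injective 1).comp (mul_right_injective₀ two_ne_zero))
  have he' : (fun k ↦ (-1) ^ (2 * k + 1) * a (2 * k)) = fun k ↦ -a (2 * k) := by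
    funext k; simp [pow_succ, pow_mul]
  have ho' : (fun k ↦ (-1) ^ (2 * k + 1 + 1) * a (2 * k + 1)) = fun k ↦ a (2 * k + 1) := by
    funext k; simp [pow_succ, pow_mul]
  rw [← tsum_even_add_odd he ho, ← tsum_even_add_odd (f := fun n ↦ (-1) ^ (n + 1) * a n)
    (by simpa only [he'] using he.neg) (by simpa only [ho'] using ho), he', ho', tsum_neg]
  noncomm_ring

section NegPoch

variable {q : ℂ}

theorem negPoch_zero (q : ℂ) : negPoch q 0 = 1 := Finset.prod_range_zero _

theorem negPoch_succ (q : ℂ) (n : ℕ) : negPoch q (n + 1) = negPoch q n * (1 + q ^ (n + 1)) :=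
  Finset.prod_range_succ _ n

theorem summable_norm_pow_succ (hq : ‖q‖ < 1) : Summable fun j : ℕ ↦ ‖q ^ (j + 1)‖ := by
  simpa [summable_nat_add_iff 1] using summable_geometric_of_lt_one (norm_nonneg _) hq

theorem one_add_pow_succ_ne_zero (hq : ‖q‖ < 1) (n : ℕ) : 1 + q ^ (n + 1) ≠ 0 := by
  intro h
  have hlt : ‖q ^ (n + 1)‖ < 1 := by
    rw [norm_pow]
    exact pow_lt_one₀ (norm_nonneg _) hq n.succ_ne_zero
  simp [eq_neg_of_add_eq_zero_right h] at hlt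

theorem negPoch_ne_zero (hq : ‖q‖ < 1) (n : ℕ) : negPoch q n ≠ 0 :=
  Finset.prod_ne_zero_iff.mpr fun j _ ↦ one_add_pow_succ_ne_zero hq j

theorem tprod_one_add_pow_succ_ne_zero (hq : ‖q‖ < 1) : ∏' j : ℕ, (1 + q ^ (j + 1)) ≠ 0 :=
  tprod_one_add_ne_zero_of_summable (fun j ↦ one_add_pow_succ_ne_zero hq j)
    (summable_norm_pow_succ hq)

theorem tendsto_negPoch (hq : ‖q‖ < 1) :
    Tendsto (negPoch q) atTop (𝓝 (∏' j : ℕ, (1 + q ^ (j + 1)))) :=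
  (multipliable_one_add_of_summable (summable_norm_pow_succ hq)).tendsto_prod_tprod_nat

theorem pow_succ_div_negPoch_succ (hq : ‖q‖ < 1) (n : ℕ) :
    q ^ (n + 1) / negPoch q (n + 1) = (negPoch q n)⁻¹ - (negPoch q (n + 1))⁻¹ := by
  have hP := negPoch_ne_zero hq n
  have hfactor := one_add_pow_succ_ne_zero hq n
  rw [negPoch_succ]
  field_simp
  ring

theorem summable_pow_succ_div_negPoch_succ (hq : ‖q‖ < 1) :
    Summable fun n : ℕ ↦ q ^ (n + 1) / negPoch q (n + 1) := by
  have hbdd : (fun n ↦ (negPoch q (n + 1))⁻¹) =O[atTop] (fun _ ↦ (1 : ℂ)) :=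
    (((tendsto_negPoch hq).inv₀ (tprod_one_add_pow_succ_ne_zero hq)).comp
      (tendsto_add_atTop_nat 1)).isBigO_one ℂ
  refine summable_of_isBigO_nat' (summable_norm_pow_succ hq).of_norm ?_
  simpa [div_eq_mul_inv] using (Asymptotics.isBigO_refl (fun n : ℕ ↦ q ^ (n + 1)) atTop).mul hbdd

theorem tsum_pow_succ_div_negPoch_succ (hq : ‖q‖ < 1) :
    ∑' n : ℕ, q ^ (n + 1) / negPoch q (n + 1) = 1 - (∏' j : ℕ, (1 + q ^ (j + 1)))⁻¹ := by
  have hinv := (tendsto_negPoch hq).inv₀ (tprod_one_add_pow_succ_ne_zero hq)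
  have hsum := (summable_pow_succ_div_negPoch_succ hq).congr (pow_succ_div_negPoch_succ hq)
  simp_rw [pow_succ_div_negPoch_succ hq]
  simpa [negPoch_zero] using (hsum.hasSum_sub_succ_of_tendsto hinv).tsum_eq

end NegPoch

theorem mock_f_minus_reciprocal_product_general (q : ℂ) (hq : ‖q‖ < 1) :
    (1 - ∑' n : ℕ, (-1 : ℂ) ^ (n + 1) * q ^ (n + 1) / negPoch q (n + 1))
      - 1 / (∏' j : ℕ, (1 + q ^ (j + 1)))
      = 2 * ∑' n : ℕ, q ^ (2 * n + 1) / negPoch q (2 * n + 1) := by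
  have htel := tsum_pow_succ_div_negPoch_succ hq
  have halt := tsum_sub_tsum_neg_one_pow_succ_mul (summable_pow_succ_div_negPoch_succ hq)
  simp_rw [mul_div_assoc]
  rw [← halt, htel, one_div]
  ring

theorem mock_f_minus_reciprocal_product (q : ℂ) (hq0 : q ≠ 0) (hq : ‖q‖ < 1) :
    (1 - ∑' n : ℕ, (-1 : ℂ) ^ (n + 1) * q ^ (n + 1) / negPoch q (n + 1))
      - 1 / (∏' j : ℕ, (1 + q ^ (j + 1)))
      = 2 * ∑' n : ℕ, q ^ (2 * n + 1) / negPoch q (2 * n + 1) :=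
  mock_f_minus_reciprocal_product_general q hq
end

section
/- For complex $q$ with $0<|q|<1$ and parameters $a_1,\ldots,a_r,b_1,\ldots,b_s$ with $(b_jq;q)_n\neq 0$ always, the Cesàro sum of the generalized strange series $\widetilde{\Phi}(a_1,\ldots,a_r;b_1,\ldots,b_s;q) = \sum_{n\geq 0}(-1)^n\frac{(a_1q,\ldots,a_rq;q)_n}{(b_1q,\ldots,b_sq;q)_n}$ exists and equals $\frac{1}{2}\left(1 - \sum_{n=1}^\infty \frac{(-1)^n q^n(\alpha_r(q^n)-\beta_s(q^n))(a_1q,\ldots,a_rq;q)_{n-1}}{(b_1q,\ldots,b_sq;q)_n}\right)$. -/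
open Filter Topology

/-- `(a₁q,…,a_rq;q)_n = ∏_i ∏_{k=0}^{n-1} (1 - aᵢ q^{k+1})`. -/
noncomputable def genPoch {r : ℕ} (a : Fin r → ℂ) (q : ℂ) (n : ℕ) : ℂ :=
  ∏ i : Fin r, ∏ k ∈ Finset.range n, (1 - a i * q ^ (k + 1))

/-- `(a₁q,…,a_rq;q)_∞` as an infinite product over the factor index. -/
noncomputable def genPochInf {r : ℕ} (a : Fin r → ℂ) (q : ℂ) : ℂ :=
  ∏' k : ℕ, ∏ i : Fin r, (1 - a i * q ^ (k + 1))

/-!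
With `t n = (-1)^n (a₁q,…,a_rq;q)_n / (b₁q,…,b_sq;q)_n`, the recursion
`(aq;q)_{n+1} = (aq;q)_n ∏ᵢ (1 - aᵢq^{n+1})` and `∏ᵢ (1 - aᵢx) = 1 - α(x)x` give
`t n + t (n+1) = -c n`, where `c n` is the `n`-th term of the series in the limit. So the partial
sums satisfy `S k + S (k+1) = 1 - ∑_{n ≤ k} c n → 1 - ∑ c`, and a sequence whose consecutive pair
sums tend to `L` has Cesàro limit `L/2`: its deviation from `L/2` alternates in sign up to errors
of vanishing Cesàro mean, so it is `o(N)`. The series `∑ c` converges absolutely because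
`c n = O(|q|^n)`, the finite products converging to `(aq;q)_∞` and to `(bq;q)_∞ ≠ 0`.
-/

open Finset Asymptotics

lemma sum_range_succ_add_sum_range_succ_succ {M : Type*} [AddCommMonoid M] (t : ℕ → M) (k : ℕ) :
    ∑ n ∈ range (k + 1), t n + ∑ n ∈ range (k + 2), t n
      = t 0 + ∑ n ∈ range (k + 1), (t n + t (n + 1)) := by
  rw [sum_range_succ' t (k + 1), sum_add_distrib]
  abel

section Cesaro

variable {𝕜 : Type*} [RCLike 𝕜]

lemma Filter.Tendsto.cesaro_div {u : ℕ → 𝕜} {l : 𝕜} (h : Tendsto u atTop (𝓝 l)) :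
    Tendsto (fun n : ℕ => (∑ i ∈ range n, u i) / n) atTop (𝓝 l) :=
  h.cesaro_smul.congr fun n => by simp [RCLike.real_smul_eq_coe_mul, div_eq_inv_mul]

lemma norm_sub_half_le_of_add_succ (S : ℕ → 𝕜) (L : 𝕜) (N : ℕ) :
    ‖S N - L / 2‖ ≤ ‖S 0 - L / 2‖ + ∑ k ∈ range N, ‖S k + S (k + 1) - L‖ := by
  induction N with
  | zero => simp
  | succ N ih =>
    rw [sum_range_succ]
    calc ‖S (N + 1) - L / 2‖ = ‖(S N + S (N + 1) - L) - (S N - L / 2)‖ := by ring_nf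
      _ ≤ ‖S N + S (N + 1) - L‖ + ‖S N - L / 2‖ := norm_sub_le _ _
      _ ≤ _ := by linarith

lemma tendsto_div_natCast_of_tendsto_add_succ {S : ℕ → 𝕜} {L : 𝕜}
    (h : Tendsto (fun k => S k + S (k + 1)) atTop (𝓝 L)) :
    Tendsto (fun N : ℕ => S N / N) atTop (𝓝 0) := by
  have hv : Tendsto (fun k => ‖S k + S (k + 1) - L‖) atTop (𝓝 0) :=
    tendsto_zero_iff_norm_tendsto_zero.1 (tendsto_sub_nhds_zero_iff.2 h)
  have hbound : Tendsto (fun N : ℕ => (‖L / 2‖ + ‖S 0 - L / 2‖) / N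
      + (N : ℝ)⁻¹ * ∑ k ∈ range N, ‖S k + S (k + 1) - L‖) atTop (𝓝 0) := by
    simpa using (tendsto_const_div_atTop_nhds_zero_nat _).add hv.cesaro
  refine squeeze_zero_norm' ?_ hbound
  filter_upwards [eventually_gt_atTop 0] with N hN
  have hN : (0 : ℝ) < N := Nat.cast_pos.2 hN
  rw [norm_div, RCLike.norm_natCast, div_le_iff₀ hN, add_mul, div_mul_cancel₀ _ hN.ne',
    mul_right_comm, inv_mul_cancel₀ hN.ne', one_mul]
  calc ‖S N‖ = ‖L / 2 + (S N - L / 2)‖ := by ring_nf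
    _ ≤ ‖L / 2‖ + ‖S N - L / 2‖ := norm_add_le _ _
    _ ≤ _ := by linarith [norm_sub_half_le_of_add_succ S L N]

lemma tendsto_cesaro_of_tendsto_add_succ {S : ℕ → 𝕜} {L : 𝕜}
    (h : Tendsto (fun k => S k + S (k + 1)) atTop (𝓝 L)) :
    Tendsto (fun N : ℕ => (∑ k ∈ range N, S k) / N) atTop (𝓝 (L / 2)) := by
  have hshift (N : ℕ) : ∑ k ∈ range N, S (k + 1) = ∑ k ∈ range N, S k + S N - S 0 := by
    rw [eq_sub_iff_add_eq, ← sum_range_succ', sum_range_succ]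
  have := ((h.cesaro_div.add (tendsto_const_div_atTop_nhds_zero_nat (S 0))).sub
    (tendsto_div_natCast_of_tendsto_add_succ h)).div_const 2
  simp only [add_zero, sub_zero] at this
  refine this.congr fun N => ?_
  rw [sum_add_distrib, hshift]
  ring

lemma tendsto_cesaro_partialSums_of_hasSum_add_succ {t c : ℕ → 𝕜} {C : 𝕜} (hc : HasSum c C)
    (htc : ∀ n, t n + t (n + 1) = -c n) :
    Tendsto (fun N : ℕ => (∑ k ∈ range N, ∑ n ∈ range (k + 1), t n) / N) atTop
      (𝓝 ((t 0 - C) / 2)) := by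
  refine tendsto_cesaro_of_tendsto_add_succ ?_
  simp_rw [sum_range_succ_add_sum_range_succ_succ, htc, sum_neg_distrib, ← sub_eq_add_neg]
  exact tendsto_const_nhds.sub (hc.tendsto_sum_nat.comp (tendsto_add_atTop_nat 1))

end Cesaro

lemma Real.exp_sub_one_le_mul_exp (x : ℝ) : Real.exp x - 1 ≤ x * Real.exp x := by
  have h := Real.add_one_le_exp (-x)
  calc Real.exp x - 1 = Real.exp x * (1 - Real.exp (-x)) := by
        rw [mul_sub, ← Real.exp_add]; simp
    _ ≤ Real.exp x * x := by gcongr; linarith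
    _ = x * Real.exp x := mul_comm _ _

section NormedRing

variable {ι R : Type*} [NormedCommRing R] [NormOneClass R]

lemma norm_prod_one_sub_mul_sub_one_le (s : Finset ι) (a : ι → R) {x : R} (hx : ‖x‖ ≤ 1) :
    ‖∏ i ∈ s, (1 - a i * x) - 1‖ ≤ (∑ i ∈ s, ‖a i‖) * Real.exp (∑ i ∈ s, ‖a i‖) * ‖x‖ := by
  set A := ∑ i ∈ s, ‖a i‖
  have hA : 0 ≤ A := sum_nonneg fun i _ => norm_nonneg _
  have hsum : ∑ i ∈ s, ‖-(a i * x)‖ ≤ A * ‖x‖ := by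
    rw [sum_mul]
    exact sum_le_sum fun i _ => (norm_neg _).trans_le (norm_mul_le _ _)
  calc ‖∏ i ∈ s, (1 - a i * x) - 1‖ = ‖∏ i ∈ s, (1 + -(a i * x)) - 1‖ := by simp [sub_eq_add_neg]
    _ ≤ Real.exp (A * ‖x‖) - 1 :=
      (s.norm_prod_one_add_sub_one_le _).trans (by gcongr)
    _ ≤ A * ‖x‖ * Real.exp (A * ‖x‖) := Real.exp_sub_one_le_mul_exp _
    _ ≤ A * ‖x‖ * Real.exp A := by
      gcongr
      exact mul_le_of_le_one_right hA hx
    _ = A * Real.exp A * ‖x‖ := by ring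

lemma summable_norm_prod_one_sub_mul_pow_sub_one (s : Finset ι) (a : ι → R) {q : R}
    (hq : ‖q‖ < 1) :
    Summable fun k : ℕ => ‖∏ i ∈ s, (1 - a i * q ^ (k + 1)) - 1‖ := by
  set K := (∑ i ∈ s, ‖a i‖) * Real.exp (∑ i ∈ s, ‖a i‖)
  refine .of_nonneg_of_le (fun _ => norm_nonneg _) (fun k => ?_)
    ((summable_geometric_of_lt_one (norm_nonneg q) hq).mul_left (K * ‖q‖))
  have hqk : ‖q ^ (k + 1)‖ ≤ ‖q‖ ^ (k + 1) := norm_pow_le _ _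
  calc _ ≤ K * ‖q ^ (k + 1)‖ :=
        norm_prod_one_sub_mul_sub_one_le s a (hqk.trans (pow_le_one₀ (norm_nonneg q) hq.le))
    _ ≤ K * ‖q‖ ^ (k + 1) := by gcongr
    _ = K * ‖q‖ * ‖q‖ ^ k := by ring

end NormedRing

section GenPoch

noncomputable def genPochFactor {r : ℕ} (a : Fin r → ℂ) (q : ℂ) (k : ℕ) : ℂ :=
  ∏ i, (1 - a i * q ^ (k + 1))

variable {r s : ℕ} (a : Fin r → ℂ) (b : Fin s → ℂ) (q : ℂ)

lemma genPoch_eq_prod_range (n : ℕ) : genPoch a q n = ∏ k ∈ range n, genPochFactor a q k :=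
  prod_comm

lemma genPochInf_eq_tprod : genPochInf a q = ∏' k, genPochFactor a q k :=
  rfl

lemma genPoch_zero : genPoch a q 0 = 1 := by
  simp [genPoch]

lemma genPoch_succ (n : ℕ) : genPoch a q (n + 1) = genPoch a q n * genPochFactor a q n := by
  simp only [genPoch_eq_prod_range, prod_range_succ]

variable {q}

lemma genPochFactor_ne_zero (ha : ∀ i k, 1 - a i * q ^ (k + 1) ≠ 0) (k : ℕ) :
    genPochFactor a q k ≠ 0 :=
  prod_ne_zero_iff.2 fun i _ => ha i k

lemma genPoch_ne_zero (ha : ∀ i k, 1 - a i * q ^ (k + 1) ≠ 0) (n : ℕ) : genPoch a q n ≠ 0 := by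
  rw [genPoch_eq_prod_range]
  exact prod_ne_zero_iff.2 fun k _ => genPochFactor_ne_zero a ha k

lemma summable_norm_genPochFactor_sub_one (hq : ‖q‖ < 1) :
    Summable fun k => ‖genPochFactor a q k - 1‖ :=
  summable_norm_prod_one_sub_mul_pow_sub_one univ a hq

lemma hasProd_genPochFactor (hq : ‖q‖ < 1) : HasProd (genPochFactor a q) (genPochInf a q) := by
  simpa only [add_sub_cancel, genPochInf_eq_tprod] using
    (multipliable_one_add_of_summable (summable_norm_genPochFactor_sub_one a hq)).hasProd

lemma tendsto_genPoch (hq : ‖q‖ < 1) : Tendsto (genPoch a q) atTop (𝓝 (genPochInf a q)) := by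
  rw [show genPoch a q = _ from funext (genPoch_eq_prod_range a q)]
  exact (hasProd_genPochFactor a hq).tendsto_prod_nat

lemma genPochInf_ne_zero (hq : ‖q‖ < 1) (ha : ∀ i k, 1 - a i * q ^ (k + 1) ≠ 0) :
    genPochInf a q ≠ 0 := by
  simpa only [add_sub_cancel, genPochInf_eq_tprod] using tprod_one_add_ne_zero_of_summable
    (by simpa only [add_sub_cancel] using genPochFactor_ne_zero a ha)
    (summable_norm_genPochFactor_sub_one a hq)

lemma summable_genPochFactor_sub_mul_genPoch_div (hq : ‖q‖ < 1)
    (hb : ∀ j k, 1 - b j * q ^ (k + 1) ≠ 0) :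
    Summable fun n : ℕ => (-1 : ℂ) ^ (n + 1) * (genPochFactor b q n - genPochFactor a q n)
      * genPoch a q n / genPoch b q (n + 1) := by
  have hdiff : Summable fun n => ‖genPochFactor b q n - genPochFactor a q n‖ :=
    .of_nonneg_of_le (fun _ => norm_nonneg _)
      (fun n => (norm_sub_le_norm_sub_add_norm_sub _ 1 _).trans_eq (by rw [norm_sub_rev 1]))
      ((summable_norm_genPochFactor_sub_one b hq).add (summable_norm_genPochFactor_sub_one a hq))
  have hquot : Tendsto (fun n => genPoch a q n / genPoch b q (n + 1)) atTop
      (𝓝 (genPochInf a q / genPochInf b q)) :=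
    (tendsto_genPoch a hq).div ((tendsto_genPoch b hq).comp (tendsto_add_atTop_nat 1))
      (genPochInf_ne_zero b hq hb)
  have hsign : (fun n : ℕ => (-1 : ℂ) ^ (n + 1) * (genPochFactor b q n - genPochFactor a q n))
      =O[atTop] fun n => ‖genPochFactor b q n - genPochFactor a q n‖ :=
    isBigO_norm_right.2 (isBigO_of_le _ fun n => by simp)
  refine summable_of_isBigO_nat hdiff ?_
  simpa only [mul_div_assoc, mul_one] using hsign.mul (hquot.isBigO_one ℝ)

lemma neg_one_pow_mul_genPoch_div_add_succ (hb : ∀ j k, 1 - b j * q ^ (k + 1) ≠ 0) (n : ℕ) :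
    (-1 : ℂ) ^ n * (genPoch a q n / genPoch b q n)
      + (-1) ^ (n + 1) * (genPoch a q (n + 1) / genPoch b q (n + 1))
      = -((-1 : ℂ) ^ (n + 1) * (genPochFactor b q n - genPochFactor a q n)
          * genPoch a q n / genPoch b q (n + 1)) := by
  have hB := genPoch_ne_zero b hb n
  have hP := genPochFactor_ne_zero b hb n
  rw [genPoch_succ a, genPoch_succ b]
  field_simp
  ring

end GenPoch

theorem generalized_strange_cesaro_general (r s : ℕ) (a : Fin r → ℂ) (b : Fin s → ℂ)
    (q : ℂ) (hq : ‖q‖ < 1)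
    (hb : ∀ (j : Fin s) (n : ℕ), (∏ k ∈ Finset.range n, (1 - b j * q ^ (k + 1))) ≠ 0)
    (α β : ℂ → ℂ)
    (hα : ∀ x : ℂ, ∏ i : Fin r, (1 - a i * x) = 1 - α x * x)
    (hβ : ∀ x : ℂ, ∏ j : Fin s, (1 - b j * x) = 1 - β x * x) :
    Tendsto (fun N : ℕ =>
        (∑ k ∈ Finset.range N, ∑ n ∈ Finset.range (k + 1),
          (-1 : ℂ) ^ n * (genPoch a q n / genPoch b q n)) / N)
      atTop
      (𝓝 ((1 - ∑' n : ℕ, (-1 : ℂ) ^ (n + 1) * q ^ (n + 1)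
            * (α (q ^ (n + 1)) - β (q ^ (n + 1))) * genPoch a q n / genPoch b q (n + 1)) / 2)) := by
  have hfac (j : Fin s) (k : ℕ) : 1 - b j * q ^ (k + 1) ≠ 0 := fun h0 =>
    hb j (k + 1) (prod_eq_zero (self_mem_range_succ k) h0)
  have hαβ (n : ℕ) : (-1 : ℂ) ^ (n + 1) * q ^ (n + 1) * (α (q ^ (n + 1)) - β (q ^ (n + 1)))
      = (-1) ^ (n + 1) * (genPochFactor b q n - genPochFactor a q n) := by
    rw [genPochFactor, genPochFactor, hα, hβ]; ring
  have hc := summable_genPochFactor_sub_mul_genPoch_div a b hq hfac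
  simp_rw [← hαβ] at hc
  have hcesaro := tendsto_cesaro_partialSums_of_hasSum_add_succ hc.hasSum fun n => by
    rw [hαβ]; exact neg_one_pow_mul_genPoch_div_add_succ a b hfac n
  simpa only [pow_zero, one_mul, genPoch_zero, div_one] using hcesaro

theorem generalized_strange_cesaro (r s : ℕ) (a : Fin r → ℂ) (b : Fin s → ℂ)
    (q : ℂ) (hq0 : q ≠ 0) (hq : ‖q‖ < 1)
    (hb : ∀ (j : Fin s) (n : ℕ), (∏ k ∈ Finset.range n, (1 - b j * q ^ (k + 1))) ≠ 0)
    (α β : ℂ → ℂ)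
    (hα : ∀ x : ℂ, ∏ i : Fin r, (1 - a i * x) = 1 - α x * x)
    (hβ : ∀ x : ℂ, ∏ j : Fin s, (1 - b j * x) = 1 - β x * x) :
    Tendsto (fun N : ℕ =>
        (∑ k ∈ Finset.range N, ∑ n ∈ Finset.range (k + 1),
          (-1 : ℂ) ^ n * (genPoch a q n / genPoch b q n)) / N)
      atTop
      (𝓝 ((1 - ∑' n : ℕ, (-1 : ℂ) ^ (n + 1) * q ^ (n + 1)
            * (α (q ^ (n + 1)) - β (q ^ (n + 1))) * genPoch a q n / genPoch b q (n + 1)) / 2)) :=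
  generalized_strange_cesaro_general r s a b q hq hb α β hα hβ
end
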